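/- arXiv:1310.1181 — 3 statements merged into one kernel-verified Lean document; each statement's English description precedes it below -/
import Mathlib

section
/- Let B be a standard one-dimensional Brownian motion with first hitting time T_1, U uniform on [0,1] independent of B, and α = B_{U T_1}/√T_1. Then for every ε with 0 < ε < 1/2, E[exp(ε (α^+)²)] < ∞, where α^+ = max(α, 0). -/
open MeasureTheory ProbabilityTheory Filter Set
open scoped ENNReal

/-- Real power with the convention `0 ^ 0 = 0`. -/
noncomputable def rpow₀ (x m : ℝ) : ℝ := if x = 0 then 0 else x ^ m

/-- `B` is a standard one-dimensional Brownian motion under `P`: almost surely continuous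
paths, `B 0 = 0`, independent increments, and `B t - B s` Gaussian with mean `0` and
variance `t - s` for `0 ≤ s ≤ t`. -/
structure IsBrownianMotion {Ω : Type*} [MeasurableSpace Ω] (P : Measure Ω)
    (B : ℝ → Ω → ℝ) : Prop where
  isProb : IsProbabilityMeasure P
  meas : ∀ t : ℝ, Measurable (B t)
  init : ∀ᵐ ω ∂P, B 0 ω = 0
  cont : ∀ᵐ ω ∂P, Continuous fun t => B t ω
  indep : ∀ (n : ℕ) (t : ℕ → ℝ), Monotone t → (∀ i, 0 ≤ t i) →
      iIndepFun
        (fun i : Fin n => fun ω => B (t (i + 1)) ω - B (t i) ω) P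
  gauss : ∀ s t : ℝ, 0 ≤ s → s ≤ t →
      P.map (fun ω => B t ω - B s ω) = gaussianReal 0 (Real.toNNReal (t - s))

/-- First hitting time of level `a` by `B`. -/
noncomputable def hitTime {Ω : Type*} (B : ℝ → Ω → ℝ) (a : ℝ) (ω : Ω) : ℝ :=
  sInf {t : ℝ | 0 ≤ t ∧ B t ω = a}

/-!
Before `T₁` the path stays below `1`, so `α⁺ ≤ T₁^{-1/2}` and it suffices to show
`E[exp (ε / T₁)] < ∞`. Doob's maximal inequality for the submartingale `exp (λ B)` along dyadic
grids, together with path continuity, gives `P(T₁ ≤ t) ≤ exp (-a² / (2t))` for every `a < 1`;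
choosing `a² > 2ε` and splitting according to the layer `k + 1 ≤ 1 / T₁ < k + 2` bounds the
expectation by a convergent geometric series.
-/

open Real Finset

theorem iIndepFun_of_forall_fin {Ω β : Type*} [MeasurableSpace Ω] [MeasurableSpace β]
    {μ : Measure Ω} {f : ℕ → Ω → β} (h : ∀ n, iIndepFun (fun i : Fin n => f i) μ) :
    iIndepFun f μ := by
  rw [iIndepFun_iff_measure_inter_preimage_eq_mul]
  intro S sets hsets
  set n := S.sup id + 1
  have hS : (univ.filter fun i : Fin n => (i : ℕ) ∈ S).map Fin.valEmbedding = S := by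
    ext i
    simp only [Finset.mem_map, Finset.mem_filter, Finset.mem_univ, true_and,
      Fin.valEmbedding_apply]
    refine ⟨fun ⟨j, hj, hji⟩ => hji ▸ hj, fun hi => ⟨⟨i, ?_⟩, hi, rfl⟩⟩
    exact Nat.lt_succ_of_le (Finset.le_sup (f := id) hi)
  have := (h n).measure_inter_preimage_eq_mul _ (sets := fun i => sets i)
    (fun i hi => hsets i (hS ▸ Finset.mem_map_of_mem _ hi))
  rw [← hS, Finset.prod_map, Finset.map_eq_image, Finset.set_biInter_finset_image]
  exact this

section RandomWalk

variable {Ω : Type*} [MeasurableSpace Ω] {P : Measure Ω} {Y : ℕ → Ω → ℝ} {l : ℝ}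

theorem submartingale_exp_mul_partialSum (hY : iIndepFun Y P) (hmeas : ∀ i, Measurable (Y i))
    (hint : ∀ i, Integrable (fun ω => exp (l * Y i ω)) P) (hmgf : ∀ i, 1 ≤ mgf (Y i) P l) :
    Submartingale (fun k ω => exp (l * ∑ i ∈ range (k + 1), Y i ω))
      (Filtration.natural Y fun i => (hmeas i).stronglyMeasurable) P := by
  have := hY.isProbabilityMeasure
  set 𝒢 := Filtration.natural Y fun i => (hmeas i).stronglyMeasurable
  set S := fun k ω => exp (l * ∑ i ∈ range (k + 1), Y i ω)
  have hS_meas : ∀ k, StronglyMeasurable[𝒢 k] (S k) := fun k =>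
    ((Finset.measurable_sum _ fun i hi => (Filtration.stronglyAdapted_natural _ i).measurable.mono
      (𝒢.mono (Nat.lt_succ_iff.mp (Finset.mem_range.mp hi))) le_rfl).const_mul l).exp
      |>.stronglyMeasurable
  have hS_int : ∀ k, Integrable (S k) P := by
    intro k
    have hpos : 0 < mgf (∑ i ∈ range (k + 1), Y i) P l :=
      hY.mgf_sum hmeas _ ▸ prod_pos fun i _ => mgf_pos (hint i)
    simpa only [Finset.sum_apply] using mgf_pos_iff.mp hpos
  refine submartingale_nat hS_meas hS_int fun k => ?_
  have hindep : Indep (MeasurableSpace.comap (Y (k + 1)) inferInstance) (𝒢 k) P := by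
    have := indep_iSup_of_disjoint (fun i => (hmeas i).comap_le)
      ((iIndepFun_iff_iIndep _ _ _).mp hY)
      (S := {k + 1}) (T := Set.Iic k) (by simp)
    rw [_root_.iSup_singleton] at this
    exact this
  set g := fun ω => exp (l * Y (k + 1) ω)
  have hstep : S (k + 1) = S k * g := by
    ext ω
    simp only [S, g, Pi.mul_apply, sum_range_succ _ (k + 1), mul_add, exp_add]
  have hg : P[g | 𝒢 k] =ᵐ[P] fun _ => mgf (Y (k + 1)) P l :=
    condExp_indep_eq (hmeas _).comap_le (𝒢.le k)
      (((comap_measurable (Y (k + 1))).const_mul l).exp.stronglyMeasurable) hindep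
  filter_upwards [condExp_mul_of_stronglyMeasurable_left (hS_meas k) (hstep ▸ hS_int (k + 1))
    (hint (k + 1)), hg] with ω hpull hgω
  rw [hstep, hpull, Pi.mul_apply, hgω]
  exact le_mul_of_one_le_right (exp_pos _).le (hmgf _)

theorem measure_exists_partialSum_ge_le (hY : iIndepFun Y P) (hmeas : ∀ i, Measurable (Y i))
    (hint : ∀ i, Integrable (fun ω => exp (l * Y i ω)) P) (hmgf : ∀ i, 1 ≤ mgf (Y i) P l)
    (hl : 0 ≤ l) (a : ℝ) (n : ℕ) :
    P {ω | ∃ k ≤ n, a ≤ ∑ i ∈ range (k + 1), Y i ω}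
      ≤ ENNReal.ofReal (exp (-(l * a)) * ∏ i ∈ range (n + 1), mgf (Y i) P l) := by
  have := hY.isProbabilityMeasure
  have hsub := submartingale_exp_mul_partialSum hY hmeas hint hmgf
  set c : NNReal := ⟨exp (l * a), (exp_pos _).le⟩
  set A := {ω | (c : ℝ) ≤ (range (n + 1)).sup' nonempty_range_add_one
    fun k => exp (l * ∑ i ∈ range (k + 1), Y i ω)}
  have hsubset : {ω | ∃ k ≤ n, a ≤ ∑ i ∈ range (k + 1), Y i ω} ⊆ A := by
    rintro ω ⟨k, hk, hka⟩
    exact le_sup'_of_le (fun k => exp (l * ∑ i ∈ range (k + 1), Y i ω))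
      (mem_range.2 (Nat.lt_succ_of_le hk)) (exp_le_exp.2 (mul_le_mul_of_nonneg_left hka hl))
  have hintegral : ∫ ω in A, exp (l * ∑ i ∈ range (n + 1), Y i ω) ∂P
      ≤ ∏ i ∈ range (n + 1), mgf (Y i) P l := by
    rw [← hY.mgf_sum hmeas]
    simp only [mgf, Finset.sum_apply]
    exact setIntegral_le_integral (hsub.integrable n) (ae_of_all _ fun ω => (exp_pos _).le)
  have hc : ENNReal.ofReal (exp (-(l * a))) * c = 1 := by
    rw [← ENNReal.ofReal_coe_nnreal, ← ENNReal.ofReal_mul (exp_pos _).le]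
    change ENNReal.ofReal (exp (-(l * a)) * exp (l * a)) = 1
    rw [← exp_add, neg_add_cancel, exp_zero, ENNReal.ofReal_one]
  calc P {ω | ∃ k ≤ n, a ≤ ∑ i ∈ range (k + 1), Y i ω}
      ≤ ENNReal.ofReal (exp (-(l * a))) * (c * P A) := by
        rw [← mul_assoc, hc, one_mul]; exact measure_mono hsubset
    _ ≤ ENNReal.ofReal (exp (-(l * a)))
          * ENNReal.ofReal (∏ i ∈ range (n + 1), mgf (Y i) P l) := by
        gcongr
        exact (maximal_ineq hsub (fun k ω => (exp_pos _).le) n).trans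
          (ENNReal.ofReal_le_ofReal hintegral)
    _ = _ := (ENNReal.ofReal_mul (exp_pos _).le).symm

end RandomWalk

section ExpMoment

variable {Ω : Type*} [MeasurableSpace Ω] {P : Measure Ω}

theorem lintegral_ofReal_exp_mul_lt_top [IsFiniteMeasure P] {X : Ω → ℝ} {D : ℕ → Set Ω}
    {ε c : ℝ} (hε : 0 ≤ ε) (hεc : ε < c) (hD : ∀ k, MeasurableSet (D k))
    (hXD : ∀ᵐ ω ∂P, ∀ k : ℕ, (k : ℝ) + 1 ≤ X ω → ω ∈ D k)
    (hPD : ∀ k : ℕ, P (D k) ≤ ENNReal.ofReal (exp (-(c * (k + 1))))) :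
    ∫⁻ ω, ENNReal.ofReal (exp (ε * X ω)) ∂P < ⊤ := by
  set H : Ω → ℝ≥0∞ := fun ω => ENNReal.ofReal (exp ε) +
    ∑' k : ℕ, (D k).indicator (fun _ => ENNReal.ofReal (exp (ε * (k + 2)))) ω
  have hXH : ∀ᵐ ω ∂P, ENNReal.ofReal (exp (ε * X ω)) ≤ H ω := by
    filter_upwards [hXD] with ω hω
    rcases lt_or_ge (X ω) 1 with hX | hX
    · exact le_add_right (ENNReal.ofReal_le_ofReal (exp_le_exp.2 (by nlinarith)))
    · set k := ⌊X ω - 1⌋₊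
      have hk : (k : ℝ) + 1 ≤ X ω := by linarith [Nat.floor_le (sub_nonneg.2 hX)]
      have hk' : X ω < k + 2 := by linarith [Nat.lt_floor_add_one (X ω - 1)]
      refine le_add_left (le_trans ?_ (ENNReal.le_tsum k))
      rw [indicator_of_mem (hω k hk)]
      exact ENNReal.ofReal_le_ofReal (exp_le_exp.2 (mul_le_mul_of_nonneg_left hk'.le hε))
  have hH : ∫⁻ ω, H ω ∂P = ENNReal.ofReal (exp ε) * P univ +
      ∑' k : ℕ, ENNReal.ofReal (exp (ε * (k + 2))) * P (D k) := by
    rw [lintegral_add_left measurable_const, lintegral_const,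
      lintegral_tsum fun k => (measurable_const.indicator (hD k)).aemeasurable]
    simp_rw [lintegral_indicator_const (hD _)]
  set q := exp (ε - c)
  have hterm : ∀ k : ℕ, ENNReal.ofReal (exp (ε * (k + 2))) * P (D k)
      ≤ ENNReal.ofReal (exp (2 * ε - c)) * ENNReal.ofReal q ^ k := by
    intro k
    calc _ ≤ ENNReal.ofReal (exp (ε * (k + 2))) * ENNReal.ofReal (exp (-(c * (k + 1)))) := by
          gcongr; exact hPD k
      _ = _ := by
        rw [← ENNReal.ofReal_mul (exp_pos _).le, ← ENNReal.ofReal_pow (exp_pos _).le,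
          ← ENNReal.ofReal_mul (exp_pos _).le, ← exp_nat_mul, ← exp_add, ← exp_add]
        ring_nf
  have hq : ENNReal.ofReal q < 1 := by
    rw [ENNReal.ofReal_lt_one]; exact exp_lt_one_iff.2 (by linarith)
  calc ∫⁻ ω, ENNReal.ofReal (exp (ε * X ω)) ∂P ≤ ∫⁻ ω, H ω ∂P := lintegral_mono_ae hXH
    _ ≤ ENNReal.ofReal (exp ε) * P univ +
        ∑' k : ℕ, ENNReal.ofReal (exp (2 * ε - c)) * ENNReal.ofReal q ^ k :=
      hH ▸ add_le_add_right (ENNReal.tsum_le_tsum hterm) _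
    _ < ⊤ := by
      rw [ENNReal.tsum_mul_left, ENNReal.tsum_geometric]
      exact ENNReal.add_lt_top.2 ⟨by finiteness, ENNReal.mul_lt_top ENNReal.ofReal_lt_top
        (ENNReal.inv_lt_top.2 (tsub_pos_of_lt hq))⟩

end ExpMoment

section HitTime

variable {Ω : Type*} {B : ℝ → Ω → ℝ} {ω : Ω} {c : ℝ}

theorem hitTime_nonneg : 0 ≤ hitTime B c ω := Real.sInf_nonneg fun _ h => h.1

theorem apply_hitTime_eq (hcont : Continuous fun t => B t ω) (hpos : 0 < hitTime B c ω) :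
    B (hitTime B c ω) ω = c := by
  have hne : {t : ℝ | 0 ≤ t ∧ B t ω = c}.Nonempty := by
    rw [Set.nonempty_iff_ne_empty]
    intro h
    simp [hitTime, h] at hpos
  have hclosed : IsClosed {t : ℝ | 0 ≤ t ∧ B t ω = c} :=
    (isClosed_le continuous_const continuous_id).inter (isClosed_eq hcont continuous_const)
  exact (hclosed.csInf_mem hne ⟨0, fun _ h => h.1⟩).2

theorem apply_le_of_le_hitTime (hcont : Continuous fun t => B t ω) (h0 : B 0 ω ≤ c) {s : ℝ}
    (hs : 0 ≤ s) (hsT : s ≤ hitTime B c ω) : B s ω ≤ c := by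
  by_contra! h
  obtain ⟨r, hr, hBr⟩ := intermediate_value_Icc hs hcont.continuousOn ⟨h0, h.le⟩
  have hTr : hitTime B c ω ≤ r := csInf_le ⟨0, fun _ h => h.1⟩ ⟨hr.1, hBr⟩
  have hrs : r = s := le_antisymm hr.2 (hsT.trans hTr)
  exact h.ne' (hrs ▸ hBr)

theorem sq_max_div_sqrt_hitTime_le (hcont : Continuous fun t => B t ω) (h0 : B 0 ω ≤ c)
    (hc : 0 ≤ c) {x : ℝ} (hx : x ∈ Set.Icc 0 1) :
    max (B (x * hitTime B c ω) ω / √(hitTime B c ω)) 0 ^ 2 ≤ c ^ 2 / hitTime B c ω := by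
  rcases (hitTime_nonneg (B := B) (c := c) (ω := ω)).eq_or_lt with hT | hT
  · -- both sides vanish: `√0 = 0` and `x / 0 = 0`
    rw [← hT]; simp
  set T := hitTime B c ω
  have hBx : B (x * T) ω ≤ c := apply_le_of_le_hitTime hcont h0 (mul_nonneg hx.1 hT.le)
    (mul_le_of_le_one_left hT.le hx.2)
  have hmax : max (B (x * T) ω / √T) 0 ≤ c / √T :=
    max_le (div_le_div_of_nonneg_right hBx (sqrt_nonneg _)) (div_nonneg hc (sqrt_nonneg _))
  calc max (B (x * T) ω / √T) 0 ^ 2 ≤ (c / √T) ^ 2 := pow_le_pow_left₀ (le_max_right _ _) hmax 2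
    _ = c ^ 2 / T := by rw [div_pow, sq_sqrt hT.le]

/-- A countable, hence measurable, substitute for `{ω | ∃ s ∈ (0, t], a ≤ B s ω}`. -/
def dyadicExceedSet (B : ℝ → Ω → ℝ) (t a : ℝ) : Set Ω :=
  ⋃ m : ℕ, ⋃ k ∈ Finset.range (2 ^ m), {ω | a ≤ B ((k + 1) * t / 2 ^ m) ω}

theorem measurableSet_dyadicExceedSet [MeasurableSpace Ω] (hB : ∀ t, Measurable (B t))
    {t a : ℝ} : MeasurableSet (dyadicExceedSet B t a) :=
  .iUnion fun _ => Finset.measurableSet_biUnion _ fun _ _ =>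
    measurableSet_le measurable_const (hB _)

theorem mem_dyadicExceedSet_of_hitTime_le (hcont : Continuous fun t => B t ω)
    (hpos : 0 < hitTime B c ω) {t a : ℝ} (hle : hitTime B c ω ≤ t) (hac : a < c) :
    ω ∈ dyadicExceedSet B t a := by
  set T := hitTime B c ω
  have ht : 0 < t := hpos.trans_le hle
  obtain ⟨δ, hδ, hnear⟩ := Metric.eventually_nhds_iff.mp
    ((hcont.tendsto T).eventually (lt_mem_nhds (apply_hitTime_eq hcont hpos ▸ hac)))
  obtain ⟨m, hm⟩ := pow_unbounded_of_one_lt (t / δ) one_lt_two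
  set x := T * 2 ^ m / t
  have hx : 0 < x := div_pos (mul_pos hpos (pow_pos two_pos m)) ht
  have hxm : x ≤ 2 ^ m := by
    rw [div_le_iff₀ ht, mul_comm _ t]; gcongr
  have hceil : (⌈x⌉₊ - 1 + 1 : ℕ) = ⌈x⌉₊ := Nat.sub_add_cancel (Nat.ceil_pos.2 hx)
  simp only [dyadicExceedSet, mem_iUnion, Finset.mem_range, mem_ofPred_eq]
  refine ⟨m, ⌈x⌉₊ - 1, ?_, (hnear ?_).le⟩
  · have : ⌈x⌉₊ ≤ 2 ^ m := Nat.ceil_le.2 (by exact_mod_cast hxm)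
    omega
  · have hs : ((⌈x⌉₊ - 1 : ℕ) : ℝ) + 1 = ⌈x⌉₊ := by exact_mod_cast hceil
    have hxT : x * t / 2 ^ m = T := by
      rw [div_mul_cancel₀ _ ht.ne', mul_div_cancel_right₀ _ (by positivity)]
    have hlo : T ≤ ⌈x⌉₊ * t / 2 ^ m := hxT ▸ by gcongr; exact Nat.le_ceil x
    have hhi : ⌈x⌉₊ * t / 2 ^ m < T + t / 2 ^ m :=
      calc ⌈x⌉₊ * t / 2 ^ m < (x + 1) * t / 2 ^ m := by gcongr; exact Nat.ceil_lt_add_one hx.le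
        _ = T + t / 2 ^ m := by rw [← hxT]; ring
    have hmesh : t / 2 ^ m < δ := by
      rw [div_lt_iff₀ (by positivity)]; rwa [div_lt_iff₀ hδ, mul_comm] at hm
    rw [hs, Real.dist_eq, abs_lt]
    constructor <;> linarith

end HitTime

namespace IsBrownianMotion

variable {Ω : Type*} [MeasurableSpace Ω] {P : Measure Ω} {B : ℝ → Ω → ℝ} {l : ℝ}

theorem mgf_sub (hB : IsBrownianMotion P B) {s t : ℝ} (hs : 0 ≤ s) (hst : s ≤ t) :
    mgf (fun ω => B t ω - B s ω) P l = exp ((t - s) * l ^ 2 / 2) := by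
  rw [mgf_gaussianReal (hB.gauss s t hs hst), Real.coe_toNNReal _ (sub_nonneg.2 hst), zero_mul,
    zero_add]

theorem measure_exists_ge_le (hB : IsBrownianMotion P B) {u : ℕ → ℝ} (hu : Monotone u)
    (hu0 : u 0 = 0) (hl : 0 ≤ l) (a : ℝ) (n : ℕ) :
    P {ω | ∃ k ≤ n, a ≤ B (u (k + 1)) ω}
      ≤ ENNReal.ofReal (exp (-(l * a) + u (n + 1) * l ^ 2 / 2)) := by
  have := hB.isProb
  have hu_nonneg : ∀ i, 0 ≤ u i := fun i => hu0 ▸ hu (Nat.zero_le i)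
  set Y := fun i ω => B (u (i + 1)) ω - B (u i) ω
  have hmgf : ∀ i, mgf (Y i) P l = exp ((u (i + 1) - u i) * l ^ 2 / 2) := fun i =>
    hB.mgf_sub (hu_nonneg i) (hu i.le_succ)
  have hbound := measure_exists_partialSum_ge_le (Y := Y)
    (iIndepFun_of_forall_fin fun n => hB.indep n u hu hu_nonneg)
    (fun i => (hB.meas _).sub (hB.meas _))
    (fun i => mgf_pos_iff.mp (hmgf i ▸ exp_pos _))
    (fun i => hmgf i ▸ one_le_exp (by have := hu i.le_succ; positivity)) hl a n
  have htelescope : ∀ k ω, ∑ i ∈ range (k + 1), Y i ω = B (u (k + 1)) ω - B 0 ω := by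
    intro k ω
    rw [sum_range_sub (fun i => B (u i) ω), hu0]
  have hprod : ∏ i ∈ range (n + 1), mgf (Y i) P l = exp (u (n + 1) * l ^ 2 / 2) := by
    simp_rw [hmgf]
    rw [← exp_sum, ← sum_div, ← sum_mul, sum_range_sub, hu0, sub_zero]
  calc P {ω | ∃ k ≤ n, a ≤ B (u (k + 1)) ω}
      ≤ P {ω | ∃ k ≤ n, a ≤ ∑ i ∈ range (k + 1), Y i ω} := by
        refine measure_mono_ae ?_
        filter_upwards [hB.init] with ω h0 ⟨k, hk, hka⟩
        exact ⟨k, hk, by rwa [htelescope, h0, sub_zero]⟩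
    _ ≤ _ := by rwa [hprod, ← exp_add] at hbound

theorem measure_dyadicExceedSet_le (hB : IsBrownianMotion P B) {t a : ℝ} (ht : 0 < t)
    (ha : 0 ≤ a) : P (dyadicExceedSet B t a) ≤ ENNReal.ofReal (exp (-(a ^ 2 / (2 * t)))) := by
  have hmono : Monotone fun m : ℕ =>
      ⋃ k ∈ Finset.range (2 ^ m), {ω | a ≤ B ((k + 1) * t / 2 ^ m) ω} := by
    refine monotone_nat_of_le_succ fun m ω => ?_
    simp only [mem_iUnion, Finset.mem_range, mem_ofPred_eq]
    rintro ⟨k, hk, hka⟩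
    have hpoint : (((2 * k + 1 : ℕ) : ℝ) + 1) * t / 2 ^ (m + 1) = (k + 1) * t / 2 ^ m := by
      push_cast
      field_simp
      ring
    exact ⟨2 * k + 1, by rw [pow_succ]; omega, hpoint ▸ hka⟩
  rw [dyadicExceedSet, hmono.measure_iUnion]
  refine iSup_le fun m => ?_
  set u : ℕ → ℝ := fun j => j * t / 2 ^ m
  have hu : Monotone u := fun i j hij => by simp only [u]; gcongr
  have hN : (2 ^ m - 1 + 1 : ℕ) = 2 ^ m := Nat.sub_add_cancel Nat.one_le_two_pow
  calc P (⋃ k ∈ Finset.range (2 ^ m), {ω | a ≤ B ((k + 1) * t / 2 ^ m) ω})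
      ≤ P {ω | ∃ k ≤ 2 ^ m - 1, a ≤ B (u (k + 1)) ω} := by
        refine measure_mono fun ω => ?_
        simp only [mem_iUnion, Finset.mem_range, mem_ofPred_eq]
        rintro ⟨k, hk, hka⟩
        exact ⟨k, by omega, by simpa [u] using hka⟩
    _ ≤ ENNReal.ofReal (exp (-(a / t * a) + u (2 ^ m - 1 + 1) * (a / t) ^ 2 / 2)) :=
        hB.measure_exists_ge_le hu (by simp [u]) (div_nonneg ha ht.le) a _
    _ = ENNReal.ofReal (exp (-(a ^ 2 / (2 * t)))) := by
        simp only [u, hN]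
        congr 2
        push_cast
        field_simp
        ring

end IsBrownianMotion

theorem brownian_alpha_plus_exp_square_finite_general {Ω : Type*} [MeasurableSpace Ω] (P : Measure Ω)
    (B : ℝ → Ω → ℝ) (hB : IsBrownianMotion P B) (U : Ω → ℝ) (hUm : Measurable U)
    (hU : P.map U = volume.restrict (Set.Icc (0:ℝ) 1))
    (ε : ℝ) (hε0 : 0 < ε) (hε : ε < 1 / 2) :
    (∫⁻ ω, ENNReal.ofReal (Real.exp (ε *
        (max (B (U ω * hitTime B 1 ω) ω / Real.sqrt (hitTime B 1 ω)) 0) ^ 2)) ∂P) < ⊤ := by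
  have := hB.isProb
  obtain ⟨a, ha0, ha1, hεa⟩ : ∃ a : ℝ, 0 ≤ a ∧ a < 1 ∧ ε < a ^ 2 / 2 :=
    ⟨√(ε + 1 / 2), sqrt_nonneg _, by rw [sqrt_lt' one_pos]; linarith,
      by rw [sq_sqrt (by linarith)]; linarith⟩
  have hU01 : ∀ᵐ ω ∂P, U ω ∈ Set.Icc 0 1 :=
    ae_of_ae_map hUm.aemeasurable (hU ▸ ae_restrict_mem measurableSet_Icc)
  have htail : ∀ᵐ ω ∂P, ∀ k : ℕ, (k : ℝ) + 1 ≤ (hitTime B 1 ω)⁻¹ →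
      ω ∈ dyadicExceedSet B ((k : ℝ) + 1)⁻¹ a := by
    filter_upwards [hB.cont] with ω hcont k hk
    have hpos : 0 < hitTime B 1 ω := inv_pos.mp (lt_of_lt_of_le (by positivity) hk)
    exact mem_dyadicExceedSet_of_hitTime_le hcont hpos
      ((le_inv_comm₀ (by positivity) hpos).mp hk) ha1
  calc _ ≤ ∫⁻ ω, ENNReal.ofReal (exp (ε * (hitTime B 1 ω)⁻¹)) ∂P := by
        refine lintegral_mono_ae ?_
        filter_upwards [hB.init, hB.cont, hU01] with ω h0 hcont hUω
        gcongr
        simpa using sq_max_div_sqrt_hitTime_le hcont (h0.trans_le zero_le_one) zero_le_one hUω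
    _ < ⊤ := by
        refine lintegral_ofReal_exp_mul_lt_top hε0.le hεa
          (fun k => measurableSet_dyadicExceedSet hB.meas) htail fun k => ?_
        refine (hB.measure_dyadicExceedSet_le (by positivity) ha0).trans_eq ?_
        congr 3
        field_simp

/-- For `0 < ε < 1/2`, `E[exp(ε (α⁺)²)] < ∞`, where `α = B_{U T_1}/√T_1`. -/
theorem brownian_alpha_plus_exp_square_finite {Ω : Type*} [MeasurableSpace Ω] (P : Measure Ω)
    (B : ℝ → Ω → ℝ) (hB : IsBrownianMotion P B) (U : Ω → ℝ) (hUm : Measurable U)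
    (hU : P.map U = volume.restrict (Set.Icc (0:ℝ) 1))
    (hindep : IndepFun U (fun ω => fun t => B t ω) P)
    (ε : ℝ) (hε0 : 0 < ε) (hε : ε < 1 / 2) :
    (∫⁻ ω, ENNReal.ofReal (Real.exp (ε *
        (max (B (U ω * hitTime B 1 ω) ω / Real.sqrt (hitTime B 1 ω)) 0) ^ 2)) ∂P) < ⊤ :=
  brownian_alpha_plus_exp_square_finite_general P B hB U hUm hU ε hε0 hε
end

section
/- For all a > 0, b > 0 and m ≥ 0, the integral L(a,b,m) = ∫_0^∞ y^m (1/(a+y)^{m+1} − 1/(b+y)^{m+1}) dy converges and equals log(b/a). -/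
/-!
With `φ t = (t / (1 + t)) ^ (m + 1)` the integrand is the Frullani integrand
`y⁻¹ * (φ (y / a) - φ (y / b))`. Since `t⁻¹ * φ t = t ^ m / (1 + t) ^ (m + 1)` is integrable at `0`,
rescaling turns the integral over `(0, n)` into `∫ t in n / b..n / a, t⁻¹ * φ t`, which tends to
`φ(∞) * log (b / a) = log (b / a)`.
-/

open MeasureTheory Filter Set Real intervalIntegral Topology

section

variable {E : Type*} [NormedAddCommGroup E] [NormedSpace ℝ E]

theorem IntervalIntegrable.inv_smul_comp_mul {f : ℝ → E} {c s r : ℝ}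
    (hu : IntervalIntegrable (fun x ↦ x⁻¹ • f x) volume (c * s) (c * r)) (hc : 0 < c) :
    IntervalIntegrable (fun x ↦ x⁻¹ • f (c * x)) volume s r := by
  have h := (hu.comp_mul_left (c := c)).smul c
  rw [mul_div_cancel_left₀ s hc.ne', mul_div_cancel_left₀ r hc.ne'] at h
  refine h.congr fun x _ ↦ ?_
  simp only [Pi.smul_apply, smul_smul]
  rcases eq_or_ne x 0 with rfl | hx
  · simp
  · congr 1; field_simp

theorem integral_from_zero_inv_smul_sub_comp_mul [CompleteSpace E] {f : ℝ → E} {a b r : ℝ}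
    (ha : 0 < a) (hb : 0 < b) (hr : 0 ≤ r)
    (hu : ∀ c, 0 ≤ c → IntervalIntegrable (fun x ↦ x⁻¹ • f x) volume 0 c) :
    ∫ x in 0..r, x⁻¹ • (f (a * x) - f (b * x)) = ∫ x in b * r..a * r, x⁻¹ • f x := by
  have hcomp : ∀ c, 0 < c → IntervalIntegrable (fun x ↦ x⁻¹ • f (c * x)) volume 0 r :=
    fun c hc ↦ by
      refine IntervalIntegrable.inv_smul_comp_mul ?_ hc
      simpa using hu (c * r) (by positivity)
  simp_rw [smul_sub]
  rw [integral_sub (hcomp a ha) (hcomp b hb), Frullani.integral_comp_mul_inv_smul ha.ne',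
    Frullani.integral_comp_mul_inv_smul hb.ne', mul_zero, mul_zero]
  exact integral_interval_sub_left (hu _ (by positivity)) (hu _ (by positivity))

end

theorem tendsto_div_one_add_atTop : Tendsto (fun t : ℝ ↦ t / (1 + t)) atTop (𝓝 1) := by
  have h : Tendsto (fun t : ℝ ↦ 1 - (1 + t)⁻¹) atTop (𝓝 (1 - 0)) :=
    tendsto_const_nhds.sub <|
      tendsto_inv_atTop_zero.comp (tendsto_atTop_add_const_left _ 1 tendsto_id)
  rw [sub_zero] at h
  refine h.congr' ?_
  filter_upwards [eventually_ge_atTop 0] with t ht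
  field_simp
  ring

theorem inv_mul_div_add_rpow_add_one {c y : ℝ} (m : ℝ) (hc : 0 ≤ c) (hy : 0 < y) :
    y⁻¹ * (y / (c + y)) ^ (m + 1) = y ^ m / (c + y) ^ (m + 1) := by
  rw [div_rpow hy.le (by positivity), rpow_add_one hy.ne']
  field_simp

theorem continuousOn_rpow_div_one_add_rpow {m : ℝ} (hm : 0 ≤ m) :
    ContinuousOn (fun t : ℝ ↦ t ^ m / (1 + t) ^ (m + 1)) (Ici 0) := by
  intro t (ht : 0 ≤ t)
  apply ContinuousAt.continuousWithinAt
  fun_prop (disch := first | positivity | exact Or.inr hm | exact Or.inl (by positivity))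

theorem intervalIntegrable_inv_mul_div_one_add_rpow {m c : ℝ} (hm : 0 ≤ m) (hc : 0 ≤ c) :
    IntervalIntegrable (fun t : ℝ ↦ t⁻¹ * (t / (1 + t)) ^ (m + 1)) volume 0 c := by
  have h : IntervalIntegrable (fun t : ℝ ↦ t ^ m / (1 + t) ^ (m + 1)) volume 0 c :=
    (continuousOn_rpow_div_one_add_rpow hm).mono (by simp [uIcc_of_le hc, Icc_subset_Ici_self])
      |>.intervalIntegrable
  refine h.congr fun t ht ↦ ?_
  rw [uIoc_of_le hc] at ht
  exact (inv_mul_div_add_rpow_add_one m zero_le_one ht.1).symm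

/-- `∫_0^∞ y^m (1/(a+y)^{m+1} − 1/(b+y)^{m+1}) dy`, understood as the limit of the integrals
over `(0, n)` as `n → ∞`, converges to `log(b/a)`. -/
theorem L_integral_eq_log {a b m : ℝ} (ha : 0 < a) (hb : 0 < b) (hm : 0 ≤ m) :
    Tendsto (fun n : ℝ => ∫ y in (0:ℝ)..n,
        y ^ m * (1 / (a + y) ^ (m + 1) - 1 / (b + y) ^ (m + 1)))
      atTop (nhds (Real.log (b / a))) := by
  set f : ℝ → ℝ := fun t ↦ (t / (1 + t)) ^ (m + 1)
  have hf : LocallyIntegrableOn f (Ioi 0) := by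
    refine ContinuousOn.locallyIntegrableOn (fun t (ht : 0 < t) ↦ ?_) measurableSet_Ioi
    apply ContinuousAt.continuousWithinAt
    fun_prop (disch := positivity)
  have hlim := Frullani.tendsto_integral_inv_smul_atTop hf (inv_pos.2 hb) (inv_pos.2 ha)
    (tendsto_div_one_add_atTop.rpow_const (p := m + 1) (Or.inl one_ne_zero))
  rw [inv_div_inv, one_rpow, smul_eq_mul, mul_one] at hlim
  refine hlim.congr' ?_
  filter_upwards [eventually_ge_atTop 0] with n hn
  rw [← integral_from_zero_inv_smul_sub_comp_mul (inv_pos.2 ha) (inv_pos.2 hb) hn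
    fun c hc ↦ intervalIntegrable_inv_mul_div_one_add_rpow hm hc]
  refine integral_congr_uIoo fun y hy ↦ ?_
  rw [uIoo_of_le hn] at hy
  have hscale : ∀ c : ℝ, 0 < c → c⁻¹ * y / (1 + c⁻¹ * y) = y / (c + y) := fun c hc ↦ by
    field_simp
  simp only [smul_eq_mul, mul_sub, hscale a ha, hscale b hb,
    inv_mul_div_add_rpow_add_one m ha.le hy.1, inv_mul_div_add_rpow_add_one m hb.le hy.1]
  ring
end

section
/- For every C ≥ 1, ∫_0^C (y log y)/(1+y) dy = C log C − C − (log C) log(C+1) + π²/6 + (log C)²/2 + Li₂(−1/C), where Li₂(x) = Σ_{n≥1} xⁿ/n² is the dilogarithm function. -/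
open MeasureTheory Filter Set

/-- The dilogarithm `Li₂(x) = Σ_{n ≥ 1} xⁿ/n²`. -/
noncomputable def Li2 (x : ℝ) : ℝ := ∑' n : ℕ, x ^ (n + 1) / ((n : ℝ) + 1) ^ 2

/-!
On `[0, 1]` the integrand has the antiderivative `y log y - y - log y log (1 + y) - Li₂(-y)`, and on
`[1, ∞)` the antiderivative `y log y - y - log y log (1 + y) + (log y)² / 2 + Li₂(-1/y)`; two are
needed because the series of `Li₂` converges only on `[-1, 1]`. Their values at `1` differ by
`2 Li₂(-1) = -π²/6`, which follows from `Li₂(1) = ζ(2) = π²/6` and the duplication formula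
`Li₂(x) + Li₂(-x) = Li₂(x²)/2`.
-/

open Real Topology

lemma hasSum_one_div_succ_sq : HasSum (fun n : ℕ => 1 / ((n : ℝ) + 1) ^ 2) (π ^ 2 / 6) := by
  simpa using (hasSum_nat_add_iff' (f := fun n : ℕ => (1 : ℝ) / (n : ℝ) ^ 2) 1).2 hasSum_zeta_two

lemma norm_pow_succ_div_sq_le {x : ℝ} (hx : |x| ≤ 1) (n : ℕ) :
    ‖x ^ (n + 1) / ((n : ℝ) + 1) ^ 2‖ ≤ 1 / ((n : ℝ) + 1) ^ 2 := by
  rw [norm_div, norm_pow, Real.norm_eq_abs, Real.norm_of_nonneg (by positivity)]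
  gcongr
  exact pow_le_one₀ (abs_nonneg x) hx

lemma hasSum_Li2 {x : ℝ} (hx : |x| ≤ 1) :
    HasSum (fun n : ℕ => x ^ (n + 1) / ((n : ℝ) + 1) ^ 2) (Li2 x) :=
  (hasSum_one_div_succ_sq.summable.of_norm_bounded (norm_pow_succ_div_sq_le hx)).hasSum

lemma Li2_zero : Li2 0 = 0 := by
  simp [Li2]

lemma Li2_one : Li2 1 = π ^ 2 / 6 := by
  simp_rw [Li2, one_pow]
  exact hasSum_one_div_succ_sq.tsum_eq

lemma Li2_add_Li2_neg {x : ℝ} (hx : |x| ≤ 1) : Li2 x + Li2 (-x) = Li2 (x ^ 2) / 2 := by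
  have hx2 : |x ^ 2| ≤ 1 := by
    rw [abs_pow]
    exact pow_le_one₀ (abs_nonneg x) hx
  have heven : ∀ k : ℕ, x ^ (2 * k + 1) / (((2 * k : ℕ) : ℝ) + 1) ^ 2
      + (-x) ^ (2 * k + 1) / (((2 * k : ℕ) : ℝ) + 1) ^ 2 = 0 := fun k => by
    rw [Odd.neg_pow ⟨k, rfl⟩]
    ring
  have hodd : ∀ k : ℕ, (x ^ 2) ^ (k + 1) / ((k : ℝ) + 1) ^ 2 / 2
      = x ^ (2 * k + 1 + 1) / (((2 * k + 1 : ℕ) : ℝ) + 1) ^ 2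
        + (-x) ^ (2 * k + 1 + 1) / (((2 * k + 1 : ℕ) : ℝ) + 1) ^ 2 := fun k => by
    rw [Even.neg_pow ⟨k + 1, by ring⟩, ← pow_mul]
    push_cast
    field_simp
    ring
  have hsum := HasSum.even_add_odd (f := fun n : ℕ => x ^ (n + 1) / ((n : ℝ) + 1) ^ 2
      + (-x) ^ (n + 1) / ((n : ℝ) + 1) ^ 2)
    (by simpa only [heven] using hasSum_zero)
    (by simpa only [hodd] using (hasSum_Li2 hx2).div_const 2)
  rw [zero_add] at hsum
  exact ((hasSum_Li2 hx).add (hasSum_Li2 (x := -x) (by rwa [abs_neg]))).unique hsum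

lemma Li2_neg_one : Li2 (-1) = -(π ^ 2 / 12) := by
  have h := Li2_add_Li2_neg (x := 1) (by norm_num)
  rw [one_pow, Li2_one] at h
  linarith

lemma continuousOn_Li2 : ContinuousOn Li2 (Icc (-1) 1) := by
  have hu := tendstoUniformlyOn_tsum (f := fun (n : ℕ) (x : ℝ) => x ^ (n + 1) / ((n : ℝ) + 1) ^ 2)
    (s := Icc (-1) 1) hasSum_one_div_succ_sq.summable
    (fun n x hx => norm_pow_succ_div_sq_le (abs_le.2 hx) n)
  exact hu.continuousOn (Eventually.of_forall fun t => by fun_prop).frequently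

lemma hasDerivAt_Li2 {x : ℝ} (hx : |x| < 1) (hx0 : x ≠ 0) :
    HasDerivAt Li2 (-log (1 - x) / x) x := by
  obtain ⟨r, hxr, hr1⟩ := exists_between hx
  have hr0 : 0 < r := (abs_nonneg x).trans_lt hxr
  have hderiv : HasDerivAt Li2 (∑' n : ℕ, x ^ n / ((n : ℝ) + 1)) x := by
    refine hasDerivAt_tsum_of_isPreconnected
      (g := fun (n : ℕ) (z : ℝ) => z ^ (n + 1) / ((n : ℝ) + 1) ^ 2)
      (g' := fun (n : ℕ) (z : ℝ) => z ^ n / ((n : ℝ) + 1))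
      (summable_geometric_of_lt_one hr0.le hr1) isOpen_Ioo isPreconnected_Ioo
      (fun n y _ => ?_) (fun n y hy => ?_) (y₀ := 0) ⟨neg_lt_zero.2 hr0, hr0⟩ (by simp)
      (abs_lt.1 hxr)
    · refine ((hasDerivAt_pow (n + 1) y).div_const (((n : ℝ) + 1) ^ 2)).congr_deriv ?_
      rw [Nat.add_sub_cancel]
      push_cast
      field_simp
    · rw [norm_div, norm_pow, Real.norm_eq_abs, Real.norm_of_nonneg (by positivity)]
      calc |y| ^ n / ((n : ℝ) + 1)
          ≤ |y| ^ n := div_le_self (by positivity) (le_add_of_nonneg_left n.cast_nonneg)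
        _ ≤ r ^ n := pow_le_pow_left₀ (abs_nonneg y) (abs_le.2 ⟨hy.1.le, hy.2.le⟩) n
  have hsum : HasSum (fun n : ℕ => x ^ n / ((n : ℝ) + 1)) (-log (1 - x) / x) := by
    have h := (hasSum_pow_div_log_of_abs_lt_one hx).div_const x
    rwa [show (fun n : ℕ => x ^ (n + 1) / ((n : ℝ) + 1) / x)
        = fun n : ℕ => x ^ n / ((n : ℝ) + 1) from funext fun n => by field_simp; ring] at h
  rwa [hsum.tsum_eq] at hderiv

lemma hasDerivAt_Li2_neg {y : ℝ} (hy0 : 0 < y) (hy1 : y < 1) :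
    HasDerivAt (fun y => Li2 (-y)) (-(log (1 + y) / y)) y := by
  refine ((hasDerivAt_Li2 (x := -y) (by rwa [abs_neg, abs_of_pos hy0])
    (neg_ne_zero.2 hy0.ne')).comp y (hasDerivAt_neg y)).congr_deriv ?_
  rw [sub_neg_eq_add]
  field_simp

lemma hasDerivAt_Li2_neg_one_div {y : ℝ} (hy : 1 < y) :
    HasDerivAt (fun y => Li2 (-1 / y)) ((log (1 + y) - log y) / y) y := by
  have hy0 : 0 < y := by linarith
  have hinv : HasDerivAt (fun y : ℝ => -1 / y) (1 / y ^ 2) y := by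
    simp only [neg_div, one_div]
    simpa using (hasDerivAt_inv hy0.ne').fun_neg
  have habs : |-1 / y| < 1 := by
    rw [abs_div, abs_neg, abs_one, abs_of_pos hy0]
    exact (div_lt_one hy0).2 hy
  refine ((hasDerivAt_Li2 habs (by simp [hy0.ne'])).comp y hinv).congr_deriv ?_
  rw [show 1 - -1 / y = (1 + y) / y by field_simp; ring, log_div (by positivity) hy0.ne']
  field_simp

-- Since `log 0 = 0`, the integrand vanishes at `0` and is continuous on all of `[0, ∞)`.
lemma continuousOn_mul_log_div_one_add :
    ContinuousOn (fun y => y * log y / (1 + y)) (Ici 0) :=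
  continuous_mul_log.continuousOn.div (by fun_prop) fun y (hy : 0 ≤ y) => by positivity

lemma intervalIntegrable_mul_log_div_one_add {a b : ℝ} (ha : 0 ≤ a) (hb : 0 ≤ b) :
    IntervalIntegrable (fun y => y * log y / (1 + y)) volume a b :=
  (continuousOn_mul_log_div_one_add.mono fun _ hy => (le_min ha hb).trans hy.1).intervalIntegrable

lemma continuousOn_log_mul_log_one_add : ContinuousOn (fun y => log y * log (1 + y)) (Ici 0) := by
  intro y (hy : 0 ≤ y)
  rcases hy.eq_or_lt with rfl | hy
  · have hmul : Tendsto (fun y => y * log y) (𝓝[Ici 0] 0) (𝓝 0) := by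
      simpa using (continuous_mul_log.tendsto 0).mono_left nhdsWithin_le_nhds
    simp only [ContinuousWithinAt, log_zero, zero_mul]
    -- `0 ≤ log (1 + z) ≤ z` gives `|log z * log (1 + z)| ≤ |z * log z|`
    refine squeeze_zero_norm' ?_ (by simpa using hmul.norm)
    filter_upwards [self_mem_nhdsWithin] with z (hz : 0 ≤ z)
    rw [norm_mul, Real.norm_eq_abs, Real.norm_eq_abs,
      abs_of_nonneg (log_nonneg (by linarith : (1 : ℝ) ≤ 1 + z)), abs_of_nonneg hz, mul_comm z]
    gcongr
    linarith [log_le_sub_one_of_pos (by linarith : 0 < 1 + z)]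
  · exact ((continuousAt_log hy.ne').mul
      ((continuousAt_log (by positivity)).comp (by fun_prop))).continuousWithinAt

noncomputable def antiderivBase (y : ℝ) : ℝ := y * log y - y - log y * log (1 + y)

lemma continuousOn_antiderivBase : ContinuousOn antiderivBase (Ici 0) :=
  (continuous_mul_log.continuousOn.sub continuousOn_id).sub continuousOn_log_mul_log_one_add

lemma hasDerivAt_antiderivBase {y : ℝ} (hy : 0 < y) :
    HasDerivAt antiderivBase (y * log y / (1 + y) - log (1 + y) / y) y := by
  have hlog : HasDerivAt (fun y => log (1 + y)) (1 / (1 + y)) y :=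
    ((hasDerivAt_id y).const_add 1).log (by positivity)
  refine (((hasDerivAt_mul_log hy.ne').sub (hasDerivAt_id y)).sub
    ((hasDerivAt_log hy.ne').mul hlog)).congr_deriv ?_
  field_simp
  ring

lemma integral_mul_log_div_one_add_zero_one :
    ∫ y in (0 : ℝ)..1, y * log y / (1 + y) = -1 + π ^ 2 / 12 := by
  have hcont : ContinuousOn (fun y => antiderivBase y - Li2 (-y)) (Icc 0 1) :=
    (continuousOn_antiderivBase.mono Icc_subset_Ici_self).sub <|
      continuousOn_Li2.comp continuousOn_neg fun y hy => ⟨by linarith [hy.2], by linarith [hy.1]⟩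
  rw [intervalIntegral.integral_eq_sub_of_hasDerivAt_of_le zero_le_one hcont
    (fun y hy => ((hasDerivAt_antiderivBase hy.1).sub (hasDerivAt_Li2_neg hy.1 hy.2)).congr_deriv
      (by ring))
    (intervalIntegrable_mul_log_div_one_add le_rfl zero_le_one)]
  simp [antiderivBase, Li2_zero, Li2_neg_one]

lemma integral_mul_log_div_one_add_one {C : ℝ} (hC : 1 ≤ C) :
    ∫ y in (1 : ℝ)..C, y * log y / (1 + y)
      = antiderivBase C + log C ^ 2 / 2 + Li2 (-1 / C) + 1 + π ^ 2 / 12 := by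
  have hcont : ContinuousOn (fun y => antiderivBase y + log y ^ 2 / 2 + Li2 (-1 / y))
      (Icc 1 C) := by
    have hne : ∀ y ∈ Icc 1 C, y ≠ 0 := fun y hy => by linarith [hy.1]
    refine ((continuousOn_antiderivBase.mono
      (Icc_subset_Ici_self.trans (Ici_subset_Ici.2 zero_le_one))).add
      (((continuousOn_log.mono hne).pow 2).div_const 2)).add <|
      continuousOn_Li2.comp (continuousOn_const.div continuousOn_id hne) fun y hy => ?_
    have hy0 : 0 < y := by linarith [hy.1]
    constructor
    · rw [neg_div, neg_le_neg_iff, div_le_one hy0]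
      exact hy.1
    · exact (div_neg_of_neg_of_pos (by norm_num) hy0).le.trans zero_le_one
  have hderiv : ∀ y ∈ Ioo 1 C, HasDerivAt
      (fun y => antiderivBase y + log y ^ 2 / 2 + Li2 (-1 / y)) (y * log y / (1 + y)) y := by
    intro y hy
    have hy0 : 0 < y := by linarith [hy.1]
    refine (((hasDerivAt_antiderivBase hy0).add
      (((hasDerivAt_log hy0.ne').pow 2).div_const 2)).add
      (hasDerivAt_Li2_neg_one_div hy.1)).congr_deriv ?_
    field_simp
    ring
  rw [intervalIntegral.integral_eq_sub_of_hasDerivAt_of_le hC hcont hderiv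
    (intervalIntegrable_mul_log_div_one_add zero_le_one (by linarith))]
  simp only [antiderivBase, log_one, div_one, Li2_neg_one]
  ring

/-- For `C ≥ 1`,
`∫_0^C (y log y)/(1+y) dy
  = C log C − C − (log C) log(C+1) + π²/6 + (log C)²/2 + Li₂(−1/C)`. -/
theorem integral_y_log_div_one_add (C : ℝ) (hC : 1 ≤ C) :
    ∫ y in (0:ℝ)..C, y * Real.log y / (1 + y)
      = C * Real.log C - C - Real.log C * Real.log (C + 1) + Real.pi ^ 2 / 6 +
          (Real.log C) ^ 2 / 2 + Li2 (-1 / C) := by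
  rw [← intervalIntegral.integral_add_adjacent_intervals
      (intervalIntegrable_mul_log_div_one_add le_rfl zero_le_one)
      (intervalIntegrable_mul_log_div_one_add zero_le_one (by linarith)),
    integral_mul_log_div_one_add_zero_one, integral_mul_log_div_one_add_one hC, antiderivBase,
    add_comm 1 C]
  ring
end
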